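/- arXiv:1905.00175 — 6 statements merged into one kernel-verified Lean document; each statement's English description precedes it below -/
import Mathlib

section
/- Let n ≥ 3 and λ ≥ 0. For every x ∈ ℝⁿ, the bHP cyclical component converges to zero under unlimited boosting: (I_n − S(λ))ᵐ x → 0 as m → ∞; equivalently, the bHP trend B_m x = (I_n − (I_n − S(λ))ᵐ)x converges to the data x itself as m → ∞ (boosting saturation in finite samples). -/
/-!
Put `P = λ D Dᵀ`, which is positive semidefinite for `λ ≥ 0`. The cyclical operator
`C = I − (I + P)⁻¹ = S (P + P²) S` with `S = (I + P)⁻¹` is positive semidefinite, while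
`I − C = S` is positive definite, so every eigenvalue of the symmetric matrix `C` lies in `[0, 1)`.
By the spectral theorem `Cᵐ = U diag(μᵢᵐ) Uᴴ → 0`.
-/

open Matrix Filter

noncomputable section

/-- The second-differencing matrix `Dᵀ` of the HP filter: the `(n−2) × n` real matrix with
`(Dᵀ f)_j = f_j − 2 f_{j+1} + f_{j+2}` (here written with 0-based indices). -/
def secondDiff (n : ℕ) : Matrix (Fin (n - 2)) (Fin n) ℝ := fun j t =>
  if t.1 = j.1 then 1 else if t.1 = j.1 + 1 then -2 else if t.1 = j.1 + 2 then 1 else 0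

/-- The HP smoothing matrix `S(λ) = (I_n + λ D Dᵀ)⁻¹`, where `Dᵀ = secondDiff n`. -/
def hpS (n : ℕ) (lam : ℝ) : Matrix (Fin n) (Fin n) ℝ :=
  (1 + lam • ((secondDiff n)ᵀ * secondDiff n))⁻¹

open Topology
open scoped ComplexOrder

namespace Matrix

variable {n 𝕜 : Type*} [Fintype n] [DecidableEq n] [RCLike 𝕜] {A : Matrix n n 𝕜}

theorem IsHermitian.tendsto_pow_atTop_nhds_zero (hA : A.IsHermitian)
    (h : ∀ i, |hA.eigenvalues i| < 1) : Tendsto (A ^ ·) atTop (𝓝 0) := by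
  have hpow (m : ℕ) : A ^ m = hA.cfc (· ^ m) := by
    rw [← hA.cfc_eq, cfc_pow_id A m hA.isSelfAdjoint]
  have hdiag : Tendsto (fun m : ℕ ↦ diagonal (RCLike.ofReal ∘ (· ^ m) ∘ hA.eigenvalues : n → 𝕜))
      atTop (𝓝 0) := by
    rw [← diagonal_zero]
    refine ((continuous_id (X := n → 𝕜)).matrix_diagonal.tendsto _).comp
      (tendsto_pi_nhds.2 fun i ↦ ?_)
    simpa [Function.comp_def] using ((RCLike.continuous_ofReal (K := 𝕜)).tendsto 0).comp
      (tendsto_pow_atTop_nhds_zero_of_abs_lt_one (h i))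
  have hconj : Continuous fun B : Matrix n n 𝕜 ↦
      Unitary.conjStarAlgAut 𝕜 _ hA.eigenvectorUnitary B := by
    simp only [Unitary.conjStarAlgAut_apply]
    fun_prop
  simpa [hpow, IsHermitian.cfc, Function.comp_def] using (hconj.tendsto 0).comp hdiag

theorem IsHermitian.eigenvalues_lt_one_of_posDef_one_sub (hA : A.IsHermitian)
    (h : (1 - A).PosDef) (i : n) : hA.eigenvalues i < 1 := by
  set v := hA.eigenvectorBasis i
  have hv : star ⇑v ⬝ᵥ ⇑v = 1 := by
    rw [dotProduct_comm, ← EuclideanSpace.inner_eq_star_dotProduct, inner_self_eq_norm_sq_to_K,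
      hA.eigenvectorBasis.orthonormal.1 i]
    simp
  have hpos := h.re_dotProduct_pos (x := ⇑v)
    (by simpa using hA.eigenvectorBasis.orthonormal.ne_zero i)
  rw [sub_mulVec, one_mulVec, dotProduct_sub, hv, map_sub, RCLike.one_re,
    ← hA.eigenvalues_eq] at hpos
  linarith

theorem PosSemidef.tendsto_pow_atTop_nhds_zero (hA : A.PosSemidef) (h : (1 - A).PosDef) :
    Tendsto (A ^ ·) atTop (𝓝 0) :=
  hA.1.tendsto_pow_atTop_nhds_zero fun i ↦ abs_lt.2
    ⟨by linarith [hA.eigenvalues_nonneg i], hA.1.eigenvalues_lt_one_of_posDef_one_sub h i⟩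

theorem PosSemidef.posDef_inv_one_add (hA : A.PosSemidef) : (1 + A)⁻¹.PosDef :=
  (PosDef.one.add_posSemidef hA).inv

theorem PosSemidef.one_sub_inv_one_add (hA : A.PosSemidef) : (1 - (1 + A)⁻¹).PosSemidef := by
  set S := (1 + A)⁻¹
  have hdet : IsUnit (1 + A).det :=
    (isUnit_iff_isUnit_det _).mp (PosDef.one.add_posSemidef hA).isUnit
  have key : 1 - S = Sᴴ * (A + Aᴴ * A) * S := by
    rw [hA.posDef_inv_one_add.isHermitian.eq, hA.isHermitian.eq]
    calc 1 - S = S * A := by rw [sub_eq_iff_eq_add', ← mul_one_add, nonsing_inv_mul _ hdet]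
      _ = S * A * ((1 + A) * S) := by rw [mul_nonsing_inv _ hdet, mul_one]
      _ = S * (A + A * A) * S := by noncomm_ring
  rw [key]
  exact (hA.add (posSemidef_conjTranspose_mul_self A)).conjTranspose_mul_mul_same S

end Matrix

theorem stmt5_general (n : ℕ) (lam : ℝ) (hlam : 0 ≤ lam) (x : Fin n → ℝ) :
    Tendsto (fun m : ℕ => ((1 - hpS n lam) ^ m) *ᵥ x) atTop (nhds 0) ∧
      Tendsto (fun m : ℕ => (1 - (1 - hpS n lam) ^ m) *ᵥ x) atTop (nhds x) := by
  have hP : (lam • ((secondDiff n)ᵀ * secondDiff n)).PosSemidef :=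
    (posSemidef_conjTranspose_mul_self (secondDiff n)).smul hlam
  have hS : (1 - (1 - hpS n lam)).PosDef := by
    rw [sub_sub_cancel]
    exact hP.posDef_inv_one_add
  have hC : (1 - hpS n lam).PosSemidef := hP.one_sub_inv_one_add
  have hcycle : Tendsto (fun m : ℕ ↦ (1 - hpS n lam) ^ m *ᵥ x) atTop (𝓝 0) := by
    simpa [Function.comp_def] using
      ((continuous_id.matrix_mulVec continuous_const).tendsto 0).comp
        (hC.tendsto_pow_atTop_nhds_zero hS)
  refine ⟨hcycle, ?_⟩
  simpa [sub_mulVec] using tendsto_const_nhds.sub hcycle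

/-- For `n ≥ 3`, `λ ≥ 0` and every `x ∈ ℝⁿ`, the bHP cyclical component
`(I_n − S(λ))ᵐ x` converges to `0` as `m → ∞`; equivalently, the bHP trend
`B_m x = (I_n − (I_n − S(λ))ᵐ) x` converges to the data `x` itself. -/
theorem stmt5 (n : ℕ) (hn : 3 ≤ n) (lam : ℝ) (hlam : 0 ≤ lam) (x : Fin n → ℝ) :
    Tendsto (fun m : ℕ => ((1 - hpS n lam) ^ m) *ᵥ x) atTop (nhds 0) ∧
      Tendsto (fun m : ℕ => (1 - (1 - hpS n lam) ^ m) *ᵥ x) atTop (nhds x) :=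
  stmt5_general n lam hlam x

end
end

section
/- Let n ≥ 3, λ ≥ 0 and δ ∈ (0, 1]. For every x ∈ ℝⁿ, the shrinkage-boosted HP cyclical component č⁽ᵐ⁾ = (I_n − δS(λ))ᵐ x converges to 0 as m → ∞. -/
/-!
The matrix `M = I + λDDᵀ` satisfies `I ≤ M` in the Loewner order, so its spectrum lies in
`[1, ∞)`. By the functional calculus of the symmetric matrix `M`, `I − δS(λ) = f(M)` with
`f(t) = 1 − δ/t`, and `f` maps `[1, ∞)` into `[1 − δ, 1) ⊆ (−1, 1)`. Hence
`(I − δS(λ))ᵐ = fᵐ(M)` is orthogonally similar to a diagonal matrix whose entries `f(μᵢ)ᵐ`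
tend to 0.
-/

open Matrix Filter

noncomputable section

open scoped Topology ComplexOrder MatrixOrder

namespace Matrix

variable {ι 𝕜 : Type*} [Fintype ι] [DecidableEq ι] [RCLike 𝕜]

theorem IsHermitian.tendsto_cfc_pow_atTop_nhds_zero {A : Matrix ι ι 𝕜} (hA : A.IsHermitian)
    {f : ℝ → ℝ} (hf : ∀ μ ∈ spectrum ℝ A, |f μ| < 1) :
    Tendsto (fun m : ℕ => cfc f A ^ m) atTop (𝓝 0) := by
  have hpow (m : ℕ) : cfc f A ^ m = hA.cfc (f · ^ m) := by
    rw [← cfc_pow f m A (A.finite_real_spectrum.continuousOn f), hA.cfc_eq]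
  have hdiag : Tendsto (fun m : ℕ => diagonal (RCLike.ofReal ∘ (f · ^ m) ∘ hA.eigenvalues))
      atTop (𝓝 (0 : Matrix ι ι 𝕜)) := by
    rw [← diagonal_zero]
    refine ((continuous_id.matrix_diagonal (n := ι)).tendsto (0 : ι → 𝕜)).comp
      (tendsto_pi_nhds.mpr fun i => ?_)
    simpa [Function.comp_def] using ((RCLike.continuous_ofReal (K := 𝕜)).tendsto 0).comp
      (tendsto_pow_atTop_nhds_zero_of_abs_lt_one (hf _ (hA.eigenvalues_mem_spectrum_real i)))
  simpa [hpow, IsHermitian.cfc] using (hdiag.const_mul _).mul_const _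

theorem PosSemidef.one_le_of_mem_spectrum_one_add {P : Matrix ι ι 𝕜} (hP : P.PosSemidef)
    {μ : ℝ} (hμ : μ ∈ spectrum ℝ (1 + P)) : 1 ≤ μ := by
  have h1 : (1 : Matrix ι ι 𝕜) ≤ 1 + P := by rwa [le_iff, add_sub_cancel_left]
  exact (CFC.one_le_iff _ (PosSemidef.one.add hP).isHermitian).mp h1 μ hμ

end Matrix

theorem abs_one_sub_mul_inv_lt_one {δ μ : ℝ} (hδ0 : 0 < δ) (hδ1 : δ ≤ 1) (hμ : 1 ≤ μ) :
    |1 - δ * μ⁻¹| < 1 := by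
  have hpos : 0 < δ * μ⁻¹ := mul_pos hδ0 (inv_pos.mpr (zero_lt_one.trans_le hμ))
  have hle : δ * μ⁻¹ ≤ 1 :=
    mul_le_one₀ hδ1 (inv_nonneg.mpr (zero_le_one.trans hμ)) (inv_le_one_of_one_le₀ hμ)
  rw [abs_lt]
  constructor <;> linarith

theorem stmt6_general (n : ℕ) (lam : ℝ) (hlam : 0 ≤ lam) (δ : ℝ) (hδ0 : 0 < δ)
    (hδ1 : δ ≤ 1) (x : Fin n → ℝ) :
    Tendsto (fun m : ℕ => ((1 - δ • hpS n lam) ^ m) *ᵥ x) atTop (nhds 0) := by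
  set M : Matrix (Fin n) (Fin n) ℝ := 1 + lam • ((secondDiff n)ᵀ * secondDiff n)
  have hP : (lam • ((secondDiff n)ᵀ * secondDiff n)).PosSemidef := by
    simpa only [conjTranspose_eq_transpose_of_trivial] using
      (posSemidef_conjTranspose_mul_self (secondDiff n)).smul hlam
  have hM : M.IsHermitian := (PosSemidef.one.add hP).isHermitian
  have hspec (μ : ℝ) (hμ : μ ∈ spectrum ℝ M) : 1 ≤ μ := hP.one_le_of_mem_spectrum_one_add hμ
  have hunit : IsUnit M :=
    (spectrum.zero_notMem_iff (R := ℝ)).mp fun h0 => by linarith [hspec 0 h0]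
  have hshrink : 1 - δ • hpS n lam = cfc (fun t => 1 - δ * t⁻¹) M := by
    have hcont (g : ℝ → ℝ) : ContinuousOn g (spectrum ℝ M) :=
      M.finite_real_spectrum.continuousOn g
    rw [cfc_sub _ _ M (hcont _) (hcont _), cfc_const_one ℝ M, cfc_const_mul _ _ M (hcont _),
      cfc_ringInverse_id M hunit, hpS, nonsing_inv_eq_ringInverse]
  have hpow := hM.tendsto_cfc_pow_atTop_nhds_zero fun μ hμ =>
    abs_one_sub_mul_inv_lt_one hδ0 hδ1 (hspec μ hμ)
  rw [← hshrink] at hpow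
  simpa [Function.comp_def] using
    ((continuous_id.matrix_mulVec continuous_const).tendsto 0).comp hpow

/-- For `n ≥ 3`, `λ ≥ 0` and `δ ∈ (0, 1]`, for every `x ∈ ℝⁿ` the
shrinkage-boosted HP cyclical component `č⁽ᵐ⁾ = (I_n − δ S(λ))ᵐ x` converges to `0` as
`m → ∞`. -/
theorem stmt6 (n : ℕ) (hn : 3 ≤ n) (lam : ℝ) (hlam : 0 ≤ lam) (δ : ℝ) (hδ0 : 0 < δ)
    (hδ1 : δ ≤ 1) (x : Fin n → ℝ) :
    Tendsto (fun m : ℕ => ((1 - δ • hpS n lam) ^ m) *ᵥ x) atTop (nhds 0) :=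
  stmt6_general n lam hlam δ hδ0 hδ1 x

end
end

section
/- Let n ≥ 3, λ ≥ 0, and m ≥ 1 an integer, and let μ_1, …, μ_n ≥ 0 be the eigenvalues (with multiplicity) of the positive semidefinite matrix DDᵀ. Then the effective degrees of freedom of the boosted HP filter satisfy the exact formula tr(B_m) = tr(I_n − (I_n − S(λ))ᵐ) = n − ∑_{k=1}^n (λμ_k/(1 + λμ_k))ᵐ. -/
open Matrix Filter

noncomputable section

/-! `I − (I − S(λ))ᵐ` is the functional calculus of the positive semidefinite matrix `D Dᵀ`
applied to `x ↦ 1 − (λx / (1 + λx))ᵐ`, which is well defined on its nonnegative spectrum.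
The trace of `f(A)` for a Hermitian `A` is the sum of `f` over the roots of the characteristic
polynomial of `A`, counted with multiplicity, and these roots are the `μ_k`. -/

open Polynomial

section

variable {ι : Type*} [Fintype ι]

lemma Polynomial.roots_prod_X_sub_C_fun {R : Type*} [CommRing R] [IsDomain R] (μ : ι → R) :
    (∏ k, (X - C (μ k))).roots = Finset.univ.val.map μ := by
  simp [roots_prod, Finset.prod_ne_zero_iff, X_sub_C_ne_zero]

lemma Fintype.sum_comp_eq_of_map_univ_eq {M R : Type*} [AddCommMonoid M] {e μ : ι → R}
    (h : Finset.univ.val.map e = Finset.univ.val.map μ) (f : R → M) :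
    ∑ i, f (e i) = ∑ i, f (μ i) := by
  simpa [Multiset.map_map, Function.comp_def] using congrArg (fun s => (s.map f).sum) h

variable [DecidableEq ι] {A : Matrix ι ι ℝ}

lemma Matrix.IsHermitian.trace_cfc_eq_sum_of_charpoly_eq (hA : A.IsHermitian) {μ : ι → ℝ}
    (hchar : A.charpoly = ∏ k, (X - C (μ k))) (f : ℝ → ℝ) :
    (cfc f A).trace = ∑ k, f (μ k) := by
  have heig : Finset.univ.val.map hA.eigenvalues = Finset.univ.val.map μ := by
    rw [← roots_prod_X_sub_C_fun, ← roots_prod_X_sub_C_fun, ← hchar, hA.charpoly_eq]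
    rfl
  rw [trace_eq_sum_roots_charpoly_of_splits (IsHermitian.splits_charpoly (cfc_predicate f A)),
    hA.charpoly_cfc_eq]
  simp only [RCLike.ofReal_real_eq_id, id, roots_prod_X_sub_C_fun, Finset.sum_map_val]
  exact Fintype.sum_comp_eq_of_map_univ_eq heig f

lemma Matrix.PosSemidef.one_sub_one_sub_inv_pow_eq_cfc (hA : A.PosSemidef) {lam : ℝ}
    (hlam : 0 ≤ lam) (m : ℕ) :
    1 - (1 - (1 + lam • A)⁻¹) ^ m = cfc (fun x => 1 - (lam * x / (1 + lam * x)) ^ m) A := by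
  have hA' : IsSelfAdjoint A := hA.isHermitian
  have hcont (f : ℝ → ℝ) : ContinuousOn f (spectrum ℝ A) := A.finite_real_spectrum.continuousOn f
  have hden : ∀ x ∈ spectrum ℝ A, 1 + lam * x ≠ 0 := fun x hx => by
    have : 0 ≤ x := (posSemidef_iff_isHermitian_and_spectrum_nonneg.mp hA).2 hx
    positivity
  have hlin : 1 + lam • A = cfc (fun x => 1 + lam * x) A := by
    rw [cfc_add .., cfc_const_one .., cfc_const_mul .., cfc_id' ..]
  rw [hlin, nonsing_inv_eq_ringInverse, ← cfc_inv _ _ hden (hcont _), ← cfc_one ℝ A,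
    ← cfc_sub _ _ _ (hcont _) (hcont _), ← cfc_pow _ _ _ (hcont _),
    ← cfc_sub _ _ _ (hcont _) (hcont _)]
  refine cfc_congr fun x hx => ?_
  simp only [Pi.one_apply]
  congr 2
  field_simp [hden x hx]
  ring

end

theorem stmt10_general (n : ℕ) (lam : ℝ) (hlam : 0 ≤ lam) (m : ℕ)
    (μ : Fin n → ℝ)
    (hchar : ((secondDiff n)ᵀ * secondDiff n).charpoly =
      ∏ k, (Polynomial.X - Polynomial.C (μ k))) :
    Matrix.trace (1 - (1 - hpS n lam) ^ m) =
      (n : ℝ) - ∑ k, (lam * μ k / (1 + lam * μ k)) ^ m := by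
  have hDDt : ((secondDiff n)ᵀ * secondDiff n).PosSemidef := by
    simpa using posSemidef_conjTranspose_mul_self (secondDiff n)
  rw [hpS, hDDt.one_sub_one_sub_inv_pow_eq_cfc hlam m,
    hDDt.isHermitian.trace_cfc_eq_sum_of_charpoly_eq hchar, Finset.sum_sub_distrib]
  simp

/-- Let `n ≥ 3`, `λ ≥ 0`, `m ≥ 1`, and let `μ_1, …, μ_n ≥ 0` be the
eigenvalues (with multiplicity, encoded via the characteristic polynomial) of the positive
semidefinite matrix `D Dᵀ`. Then
`tr(B_m) = tr(I_n − (I_n − S(λ))ᵐ) = n − ∑_{k=1}^n (λμ_k/(1 + λμ_k))ᵐ`. -/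
theorem stmt10 (n : ℕ) (hn : 3 ≤ n) (lam : ℝ) (hlam : 0 ≤ lam) (m : ℕ) (hm : 1 ≤ m)
    (μ : Fin n → ℝ) (hμ : ∀ k, 0 ≤ μ k)
    (hchar : ((secondDiff n)ᵀ * secondDiff n).charpoly =
      ∏ k, (Polynomial.X - Polynomial.C (μ k))) :
    Matrix.trace (1 - (1 - hpS n lam) ^ m) =
      (n : ℝ) - ∑ k, (lam * μ k / (1 + lam * μ k)) ^ m :=
  stmt10_general n lam hlam m μ hchar

end
end

section
/- Let n ≥ 3 and let m ≥ 1 be a fixed integer. Then lim_{λ→∞} tr(I_n − (I_n − S(λ))ᵐ) = 2. (The limit 2 equals the dimension of the kernel of DDᵀ, which is the 2-dimensional space of linear trends, because the second-differencing matrix Dᵀ has full row rank n−2.) -/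
/-!
Diagonalize the positive semidefinite matrix `DDᵀ` with eigenvalues `μᵢ ≥ 0`. Then
`I − (I − S(λ))ᵐ` has eigenvalues `1 − (λμᵢ / (1 + λμᵢ))ᵐ`, which tend to `1` when `μᵢ = 0` and
to `0` otherwise, so the trace tends to `dim ker DDᵀ = n − rank Dᵀ`. Finally `Dᵀ` has rank `n − 2`
because its first `n − 2` columns form a unit upper triangular matrix.
-/

open Matrix Filter

noncomputable section

open Topology
open scoped ComplexOrder

lemma tendsto_one_sub_one_sub_inv_one_add_mul_pow {x : ℝ} (hx : 0 ≤ x) {m : ℕ}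
    (hm : m ≠ 0) :
    Tendsto (fun t : ℝ => 1 - (1 - (1 + t * x)⁻¹) ^ m) atTop (𝓝 (if x = 0 then 1 else 0)) := by
  rcases hx.eq_or_lt with rfl | hx
  · simp [zero_pow hm]
  · have hinv : Tendsto (fun t : ℝ => (1 + t * x)⁻¹) atTop (𝓝 0) :=
      (tendsto_atTop_add_const_left _ _ (tendsto_id.atTop_mul_const hx)).inv_tendsto_atTop
    have hlim : Tendsto (fun t : ℝ => 1 - (1 - (1 + t * x)⁻¹) ^ m) atTop (𝓝 (1 - (1 - 0) ^ m)) :=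
      tendsto_const_nhds.sub ((tendsto_const_nhds.sub hinv).pow m)
    simpa [hx.ne'] using hlim

namespace Matrix

variable {ι 𝕜 : Type*} [Fintype ι] [DecidableEq ι] [RCLike 𝕜] {A : Matrix ι ι 𝕜}

lemma IsHermitian.trace_cfc (hA : A.IsHermitian) (f : ℝ → ℝ) :
    (cfc f A).trace = ∑ i, (f (hA.eigenvalues i) : 𝕜) := by
  rw [hA.cfc_eq, IsHermitian.cfc, Unitary.conjStarAlgAut_apply, trace_mul_cycle,
    Unitary.coe_star_mul_self, one_mul, trace_diagonal]
  rfl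

lemma PosSemidef.one_sub_one_sub_inv_one_add_smul_pow_eq_cfc (hA : A.PosSemidef) {t : ℝ}
    (ht : 0 ≤ t) (m : ℕ) :
    1 - (1 - (1 + t • A)⁻¹) ^ m = cfc (fun x => 1 - (1 - (1 + t * x)⁻¹) ^ m) A := by
  have hA' : IsSelfAdjoint A := hA.1
  have hcont (f : ℝ → ℝ) : ContinuousOn f (spectrum ℝ A) := A.finite_real_spectrum.continuousOn f
  have hne : ∀ x ∈ spectrum ℝ A, 1 + t * x ≠ 0 := by
    intro x hx
    obtain ⟨i, rfl⟩ := hA.1.spectrum_real_eq_range_eigenvalues ▸ hx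
    have := hA.eigenvalues_nonneg i
    positivity
  have hinv : (1 + t • A)⁻¹ = cfc (fun x => (1 + t * x)⁻¹) A := by
    rw [cfc_inv _ A hne (hcont _), cfc_const_add _ _ A (hcont _), cfc_const_mul_id t A,
      nonsing_inv_eq_ringInverse, Algebra.algebraMap_eq_smul_one, one_smul]
  rw [hinv, cfc_sub _ _ A (hcont _) (hcont _), cfc_pow _ _ A (hcont _),
    cfc_sub _ _ A (hcont _) (hcont _), cfc_const_one ℝ A]

theorem PosSemidef.tendsto_trace_one_sub_one_sub_inv_one_add_smul_pow (hA : A.PosSemidef)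
    {m : ℕ} (hm : m ≠ 0) :
    Tendsto (fun t : ℝ => (1 - (1 - (1 + t • A)⁻¹) ^ m).trace) atTop
      (𝓝 ((Fintype.card ι : 𝕜) - A.rank)) := by
  set μ := hA.1.eigenvalues
  have hcount : ∑ i, (if μ i = 0 then 1 else 0 : ℝ) = Fintype.card ι - A.rank := by
    rw [Finset.sum_boole, hA.1.rank_eq_card_non_zero_eigs, Fintype.card_subtype, ← Finset.card_univ,
      ← Finset.card_filter_add_card_filter_not (s := Finset.univ) (fun i => μ i = 0)]
    push_cast
    ring
  have hlim := tendsto_finsetSum Finset.univ fun i _ =>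
    tendsto_one_sub_one_sub_inv_one_add_mul_pow (hA.eigenvalues_nonneg i) hm
  rw [hcount] at hlim
  have hlim𝕜 := (RCLike.continuous_ofReal (K := 𝕜)).tendsto _ |>.comp hlim
  push_cast at hlim𝕜
  refine hlim𝕜.congr' ?_
  filter_upwards [eventually_ge_atTop 0] with t ht
  simp [hA.one_sub_one_sub_inv_one_add_smul_pow_eq_cfc ht, hA.1.trace_cfc]

end Matrix

lemma secondDiff_submatrix_det (n : ℕ) :
    ((secondDiff n).submatrix id (Fin.castLE (Nat.sub_le n 2))).det = 1 := by
  have htri : ((secondDiff n).submatrix id (Fin.castLE (Nat.sub_le n 2))).IsUpperTriangular := by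
    intro i j hij
    have : j.1 < i.1 := hij
    simp only [submatrix_apply, id, secondDiff, Fin.val_castLE]
    rw [if_neg (by omega), if_neg (by omega), if_neg (by omega)]
  rw [det_of_isUpperTriangular htri]
  simp [secondDiff]

lemma secondDiff_rank (n : ℕ) : (secondDiff n).rank = n - 2 := by
  refine le_antisymm (by simpa using (secondDiff n).rank_le_card_height) ?_
  have hunit : IsUnit ((secondDiff n).submatrix id (Fin.castLE (Nat.sub_le n 2))) := by
    rw [isUnit_iff_isUnit_det, secondDiff_submatrix_det]
    exact isUnit_one
  calc n - 2 = ((secondDiff n).submatrix id (Fin.castLE (Nat.sub_le n 2))).rank := by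
        rw [rank_of_isUnit _ hunit, Fintype.card_fin]
    _ ≤ (secondDiff n).rank := rank_submatrix_le _ _ _

/-- For `n ≥ 3` and fixed `m ≥ 1`,
`lim_{λ→∞} tr(I_n − (I_n − S(λ))ᵐ) = 2`. -/
theorem stmt11 (n : ℕ) (hn : 3 ≤ n) (m : ℕ) (hm : 1 ≤ m) :
    Tendsto (fun lam : ℝ => Matrix.trace (1 - (1 - hpS n lam) ^ m)) atTop (nhds 2) := by
  have hpsd : ((secondDiff n)ᵀ * secondDiff n).PosSemidef := by
    simpa using posSemidef_conjTranspose_mul_self (secondDiff n)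
  have hrank : ((secondDiff n)ᵀ * secondDiff n).rank = n - 2 := by
    rw [rank_transpose_mul_self, secondDiff_rank]
  have hlim := hpsd.tendsto_trace_one_sub_one_sub_inv_one_add_smul_pow (by omega : m ≠ 0)
  rw [hrank, Fintype.card_fin, Nat.cast_sub (by omega : 2 ≤ n)] at hlim
  simpa [hpS] using hlim

end
end

section
/- Let n ≥ 3 and λ > 0. The effective degrees of freedom tr(B_m) = tr(I_n − (I_n − S(λ))ᵐ) are strictly increasing in the integer m ≥ 1, i.e. tr(B_{m+1}) > tr(B_m), and have strictly decreasing increments, i.e. tr(B_{m+2}) − tr(B_{m+1}) < tr(B_{m+1}) − tr(B_m) for all m ≥ 1. -/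
open Matrix Filter

noncomputable section

/-!
Write `S = hpS n λ` and `A = 1 - S`. The increments of `m ↦ tr (1 - Aᵐ)` are
`tr (Aᵐ - Aᵐ⁺¹) = tr (Aᵐ S)`, and these decrease by `tr (Aᵐ S²)`. Since `S = (1 + λ DDᵀ)⁻¹` is
positive definite and `A` is positive semidefinite and nonzero (hence so is every `Aᵐ`, a Hermitian
matrix not being nilpotent), both traces are positive: `tr (P Q) = tr (C P Cᴴ) > 0` for `P ⪰ 0`
nonzero and `Q = CᴴC ≻ 0` with `C` invertible.
-/

open scoped ComplexOrder MatrixOrder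

namespace Matrix

variable {ι 𝕜 : Type*} [Fintype ι] [DecidableEq ι] [RCLike 𝕜]

lemma IsHermitian.eq_zero_of_pow_eq_zero {P : Matrix ι ι 𝕜} (hP : P.IsHermitian) {m : ℕ}
    (hm : P ^ m = 0) : P = 0 := by
  induction m using Nat.strong_induction_on with
  | _ m ih =>
    rcases Nat.lt_or_ge m 2 with hm2 | hm2
    · interval_cases m
      · simpa using congrArg (· * P) hm
      · simpa using hm
    · refine ih ((m + 1) / 2) (by omega) ?_
      rw [← trace_conjTranspose_mul_self_eq_zero_iff, (hP.pow _).eq, ← pow_add,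
        pow_eq_zero_of_le (by omega) hm, trace_zero]

lemma PosDef.pow {A : Matrix ι ι 𝕜} (hA : A.PosDef) (k : ℕ) : (A ^ k).PosDef :=
  (hA.posSemidef.pow k).posDef_iff_isUnit.mpr (hA.isUnit.pow k)

lemma PosSemidef.trace_mul_pos {A B : Matrix ι ι 𝕜} (hA : A.PosSemidef) (hA0 : A ≠ 0)
    (hB : B.PosDef) : 0 < (A * B).trace := by
  obtain ⟨C, hC, rfl⟩ := CStarAlgebra.isStrictlyPositive_iff_eq_star_mul_self.mp
    hB.isStrictlyPositive
  rw [star_eq_conjTranspose, ← mul_assoc, trace_mul_cycle]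
  have hCAC := hA.mul_mul_conjTranspose_same C
  refine hCAC.trace_nonneg.lt_of_ne' fun h => hA0 ?_
  have h0 : C * A * Cᴴ = C * 0 * Cᴴ := by
    rw [hCAC.trace_eq_zero_iff.mp h, mul_zero, zero_mul]
  exact hC.mul_left_cancel ((star_eq_conjTranspose C ▸ hC.star).mul_right_cancel h0)

variable {F : Matrix ι ι 𝕜}

lemma PosSemidef.isUnit_det_one_add (hF : F.PosSemidef) : IsUnit (1 + F).det :=
  (isUnit_iff_isUnit_det _).mp (PosDef.one.add_posSemidef hF).isUnit

lemma PosSemidef.posDef_inv_one_add_s12 (hF : F.PosSemidef) : (1 + F)⁻¹.PosDef :=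
  (PosDef.one.add_posSemidef hF).inv

lemma PosSemidef.posSemidef_one_sub_inv_one_add (hF : F.PosSemidef) :
    (1 - (1 + F)⁻¹).PosSemidef := by
  set S := (1 + F)⁻¹
  have hS : S.PosDef := hF.posDef_inv_one_add_s12
  have hdet := hF.isUnit_det_one_add
  -- With `M = 1 + F`: `1 - S = S (M² - M) S` and `M² - M = F + F²`.
  have hcongr : S * (F + Fᴴ * F) * Sᴴ = 1 - S := by
    have hSM : S * (1 + F) = 1 := nonsing_inv_mul _ hdet
    have hMS : (1 + F) * S = 1 := mul_nonsing_inv _ hdet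
    rw [hS.isHermitian.eq, hF.isHermitian.eq]
    calc S * (F + F * F) * S = S * (1 + F) * ((1 + F) * S) - S * (1 + F) * S := by noncomm_ring
      _ = 1 - S := by rw [hSM, hMS, one_mul, one_mul]
  exact hcongr ▸ (hF.add (posSemidef_conjTranspose_mul_self F)).mul_mul_conjTranspose_same S

lemma one_sub_inv_one_add_ne_zero (hF : F.PosSemidef) (hF0 : F ≠ 0) :
    1 - (1 + F)⁻¹ ≠ 0 := by
  intro h
  have hdet := hF.isUnit_det_one_add
  apply hF0
  rw [← add_eq_left (a := 1), ← nonsing_inv_nonsing_inv _ hdet, ← sub_eq_zero.mp h, inv_one]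

end Matrix

lemma secondDiff_transpose_mul_self_ne_zero {n : ℕ} (hn : 3 ≤ n) :
    (secondDiff n)ᵀ * secondDiff n ≠ 0 := by
  intro h
  have h00 := congrFun (congrFun h ⟨0, by omega⟩) ⟨0, by omega⟩
  rw [mul_apply, Finset.sum_eq_single ⟨0, by omega⟩] at h00
  · simp [secondDiff] at h00
  · intro j _ hj
    have hj0 : 0 ≠ j.1 := fun h => hj (Fin.ext h.symm)
    simp [secondDiff, hj0]
  · simp

/-- For `n ≥ 3` and `λ > 0`, the effective degrees of freedom
`tr(B_m) = tr(I_n − (I_n − S(λ))ᵐ)` are strictly increasing in `m ≥ 1` and have strictly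
decreasing increments. -/
theorem stmt12 (n : ℕ) (hn : 3 ≤ n) (lam : ℝ) (hlam : 0 < lam) :
    ∀ m : ℕ, 1 ≤ m →
      Matrix.trace (1 - (1 - hpS n lam) ^ m) <
          Matrix.trace (1 - (1 - hpS n lam) ^ (m + 1)) ∧
        Matrix.trace (1 - (1 - hpS n lam) ^ (m + 2)) -
            Matrix.trace (1 - (1 - hpS n lam) ^ (m + 1)) <
          Matrix.trace (1 - (1 - hpS n lam) ^ (m + 1)) -
            Matrix.trace (1 - (1 - hpS n lam) ^ m) := by
  intro m _
  have hF : (lam • ((secondDiff n)ᵀ * secondDiff n)).PosSemidef :=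
    (posSemidef_conjTranspose_mul_self (secondDiff n)).smul hlam.le
  have hF0 : lam • ((secondDiff n)ᵀ * secondDiff n) ≠ 0 :=
    smul_ne_zero hlam.ne' (secondDiff_transpose_mul_self_ne_zero hn)
  set S := hpS n lam
  have hS : S.PosDef := hF.posDef_inv_one_add_s12
  have hA : (1 - S).PosSemidef := hF.posSemidef_one_sub_inv_one_add
  have hAm0 : (1 - S) ^ m ≠ 0 := fun h =>
    one_sub_inv_one_add_ne_zero hF hF0 (hA.isHermitian.eq_zero_of_pow_eq_zero h)
  have hincr_pos := (hA.pow m).trace_mul_pos hAm0 hS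
  have hdecr_pos := (hA.pow m).trace_mul_pos hAm0 (hS.pow 2)
  have e1 : (1 - S) ^ (m + 1) = (1 - S) ^ m - (1 - S) ^ m * S := by
    rw [pow_succ, mul_sub, mul_one]
  have e2 : (1 - S) ^ (m + 2) =
      (1 - S) ^ m - (1 - S) ^ m * S - ((1 - S) ^ m * S - (1 - S) ^ m * S ^ 2) := by
    rw [pow_add]
    noncomm_ring
  simp only [e1, e2, trace_sub]
  constructor <;> linarith
end
end

section
/- Let ω ∈ ℝ, λ ≥ 0, and a = 4(1 − cos ω)². Define c_m : ℤ → ℝ by c_m(t) = (λa/(1 + λa))ᵐ sin(ωt) for integers m ≥ 0. Then c_0(t) = sin(ωt), and for every m ≥ 0 the function h_m = (1 + λa)⁻¹ c_m solves the HP smoothing equation λ(Δ_c² h_m) + h_m = c_m, while the boosting recursion holds: c_{m+1} = c_m − h_m. Moreover, if λ > 0 and cos ω ≠ 1, then c_m(t) → 0 as m → ∞ for every fixed t; i.e., repeated HP fitting removes any pure (non-constant) sinusoid asymptotically in the number of boosting iterations. -/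
open Real Filter

lemma key_sin (ω : ℝ) (t : ℤ) :
    Real.sin (ω * ((t : ℤ) + 1 : ℤ)) - 2 * Real.sin (ω * t) + Real.sin (ω * ((t : ℤ) - 1 : ℤ))
      = (2 * Real.cos ω - 2) * Real.sin (ω * t) := by
  push_cast
  rw [mul_add, mul_sub, mul_one, Real.sin_add, Real.sin_sub]
  ring

/-- Let `ω ∈ ℝ`, `λ ≥ 0`, `a = 4(1 − cos ω)²`, and
`c_m(t) = (λa/(1 + λa))ᵐ sin(ωt)` for `t ∈ ℤ`, `m ≥ 0`. Then `c_0(t) = sin(ωt)`; for every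
`m ≥ 0` the function `h_m = (1 + λa)⁻¹ c_m` solves the HP smoothing equation
`λ(Δ_c² h_m) + h_m = c_m`; the boosting recursion `c_{m+1} = c_m − h_m` holds; and if `λ > 0`
and `cos ω ≠ 1` then `c_m(t) → 0` as `m → ∞` for every fixed `t`. -/
theorem stmt14 (ω lam : ℝ) (hlam : 0 ≤ lam) (a : ℝ) (ha : a = 4 * (1 - Real.cos ω) ^ 2)
    (Dc : (ℤ → ℝ) → ℤ → ℝ)
    (hDc : ∀ (g : ℤ → ℝ) (t : ℤ), Dc g t = g (t + 1) - 2 * g t + g (t - 1))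
    (c : ℕ → ℤ → ℝ)
    (hc : ∀ (m : ℕ) (t : ℤ), c m t = (lam * a / (1 + lam * a)) ^ m * Real.sin (ω * t))
    (h : ℕ → ℤ → ℝ) (hh : ∀ (m : ℕ) (t : ℤ), h m t = (1 + lam * a)⁻¹ * c m t) :
    (∀ t : ℤ, c 0 t = Real.sin (ω * t)) ∧
      (∀ (m : ℕ) (t : ℤ), lam * Dc (Dc (h m)) t + h m t = c m t) ∧
      (∀ (m : ℕ) (t : ℤ), c (m + 1) t = c m t - h m t) ∧
      (0 < lam → Real.cos ω ≠ 1 →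
        ∀ t : ℤ, Tendsto (fun m : ℕ => c m t) atTop (nhds 0)) := by
  have ha0 : 0 ≤ a := by rw [ha]; positivity
  have hpos : 0 < 1 + lam * a := by positivity
  have hne : (1 + lam * a) ≠ 0 := ne_of_gt hpos
  -- first-level difference
  have hD1 : ∀ (m : ℕ) (s : ℤ),
      Dc (h m) s = (1 + lam * a)⁻¹ * (lam * a / (1 + lam * a)) ^ m
        * ((2 * Real.cos ω - 2) * Real.sin (ω * s)) := by
    intro m s
    rw [hDc, hh, hh, hh, hc, hc, hc, ← key_sin ω s]
    ring
  have hD2 : ∀ (m : ℕ) (s : ℤ),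
      Dc (Dc (h m)) s = (1 + lam * a)⁻¹ * (lam * a / (1 + lam * a)) ^ m
        * ((2 * Real.cos ω - 2) ^ 2 * Real.sin (ω * s)) := by
    intro m s
    rw [hDc, hD1, hD1, hD1]
    linear_combination ((1 + lam * a)⁻¹ * (lam * a / (1 + lam * a)) ^ m * (2 * Real.cos ω - 2)) * key_sin ω s
  refine ⟨fun t => by rw [hc]; simp, ?_, ?_, ?_⟩
  · intro m t
    rw [hD2, hh, hc]
    have haeq : (2 * Real.cos ω - 2) ^ 2 = a := by rw [ha]; ring
    rw [haeq]
    field_simp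
    ring
  · intro m t
    rw [hc, hh, hc, pow_succ]
    field_simp
    ring
  · intro hlam' hcos t
    have ha' : 0 < a := by
      rw [ha]
      have h1 : (1 - Real.cos ω) ≠ 0 := sub_ne_zero.mpr (Ne.symm hcos)
      have h2 : 0 < (1 - Real.cos ω) ^ 2 :=
        lt_of_le_of_ne (sq_nonneg _) (Ne.symm (pow_ne_zero 2 h1))
      linarith
    have hr0 : 0 ≤ lam * a / (1 + lam * a) := by positivity
    have hr1 : lam * a / (1 + lam * a) < 1 := by
      rw [div_lt_one hpos]; linarith
    have : Tendsto (fun m : ℕ => (lam * a / (1 + lam * a)) ^ m) atTop (nhds 0) :=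
      tendsto_pow_atTop_nhds_zero_of_lt_one hr0 hr1
    have := this.mul_const (Real.sin (ω * t))
    simpa [hc] using this
end
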